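/- For every ε ∈ (0, 1) there is a constant κ_ε > 0 such that for all sufficiently large λ = e^s, all α, β ∈ 𝔸 and all θ ∈ Θ, the set Z^{B,ε,λ}_{α,β,θ} is κ_ε-dominated by K¹_s ∪ Ǩ¹_s ∪ K²_s ∪ Ǩ²_s. -/

import Mathlib

open MeasureTheory Filter Set
open scoped ENNReal Topology

noncomputable section

/-- `η = a + ib`. -/
def etaC (a b : ℝ) : ℂ := (a : ℂ) + (b : ℂ) * Complex.I

/-- The open sector `S = {u+iv : v > 0, bu + av > 0}`. -/
def sectorS (a b : ℝ) : Set ℂ := {z : ℂ | 0 < z.im ∧ 0 < b * z.re + a * z.im}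

/-- The ring `𝔸 = {α : e^{-2πb} < |α| ≤ 1}`. -/
def ringA (b : ℝ) : Set ℂ :=
  {α : ℂ | Real.exp (-(2 * Real.pi * b)) < ‖α‖ ∧ ‖α‖ ≤ 1}

/-- The parametrization `x(α, ζ) = (α e^{iη(ζ + b⁻¹ log|α|)}, e^{i(ζ + b⁻¹ log|α|)})` of the
leaf `L_α` near a hyperbolic singularity. -/
def xmap (a b : ℝ) (α ζ : ℂ) : ℂ × ℂ :=
  (α * Complex.exp (Complex.I * etaC a b * (ζ + ((Real.log (‖α‖) / b : ℝ) : ℂ))),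
   Complex.exp (Complex.I * (ζ + ((Real.log (‖α‖) / b : ℝ) : ℂ))))

/-- The parameter region `Θ = {θ : |θ₁ - 1| < ε₀, |θ₂ - 1| < ε₀}`. -/
def thetaSet (e0 : ℝ) : Set (ℂ × ℂ) :=
  {θ : ℂ × ℂ | ‖θ.1 - 1‖ < e0 ∧ ‖θ.2 - 1‖ < e0}

/-- The solution set `Z^λ_{α,β,θ} = {(ζ, ζ̌) ∈ S × S : x(α,ζ) - x(β,ζ̌) = θ/λ}`. -/
def solSet (a b : ℝ) (α β : ℂ) (θ : ℂ × ℂ) (lam : ℝ) : Set (ℂ × ℂ) :=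
  {p : ℂ × ℂ | p.1 ∈ sectorS a b ∧ p.2 ∈ sectorS a b ∧
    (xmap a b α p.1).1 - (xmap a b β p.2).1 = θ.1 / (lam : ℂ) ∧
    (xmap a b α p.1).2 - (xmap a b β p.2).2 = θ.2 / (lam : ℂ)}

/-- The ratio `ρ₁ = x₁/y₁` at a solution `p = (ζ, ζ̌)`. -/
def rho1 (a b : ℝ) (α β : ℂ) (p : ℂ × ℂ) : ℂ := (xmap a b α p.1).1 / (xmap a b β p.2).1

/-- The ratio `ρ₂ = x₂/y₂` at a solution `p = (ζ, ζ̌)`. -/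
def rho2 (a b : ℝ) (α β : ℂ) (p : ℂ × ℂ) : ℂ := (xmap a b α p.1).2 / (xmap a b β p.2).2

/-- The subset `Z^{B,ε,λ}_{α,β,θ}` of solutions for which exactly one of the inequalities
`|ρ₁ - 1| ≤ ε`, `|ρ₂ - 1| ≤ ε` holds. -/
def solB (a b : ℝ) (α β : ℂ) (θ : ℂ × ℂ) (lam ε : ℝ) : Set (ℂ × ℂ) :=
  {p ∈ solSet a b α β θ lam |
    Xor' (‖rho1 a b α β p - 1‖ ≤ ε) (‖rho2 a b α β p - 1‖ ≤ ε)}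

/-- The segment `Λ⁰_{1,s}` joining `-η̄ b⁻¹ s` and `ζ_s = (1-η̄) b⁻¹ s`. -/
def lam1Seg (a b s : ℝ) : Set ℂ :=
  {z : ℂ | ∃ l : ℝ, 0 ≤ l ∧ l ≤ s / b ∧
    z = -(starRingEnd ℂ (etaC a b)) * ((s / b : ℝ) : ℂ) + (l : ℂ)}

/-- The segment `Λ⁰_{2,s}` joining `b⁻¹ s` and `ζ_s = (1-η̄) b⁻¹ s`. -/
def lam2Seg (a b s : ℝ) : Set ℂ :=
  {z : ℂ | ∃ l : ℝ, 0 ≤ l ∧ l ≤ s / b ∧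
    z = ((s / b : ℝ) : ℂ) - (starRingEnd ℂ (etaC a b)) * (l : ℂ)}

/-- `K¹_s = {(ζ, ζ̌) : ζ ∈ Λ⁰_{1,s}, ζ̌ ∈ ζ - η̄ ℝ_{≥0}}`. -/
def K1Set (a b s : ℝ) : Set (ℂ × ℂ) :=
  {p : ℂ × ℂ | p.1 ∈ lam1Seg a b s ∧
    ∃ l : ℝ, 0 ≤ l ∧ p.2 = p.1 - starRingEnd ℂ (etaC a b) * (l : ℂ)}

/-- `Ǩ¹_s = {(ζ, ζ̌) : ζ̌ ∈ Λ⁰_{1,s}, ζ ∈ ζ̌ - η̄ ℝ_{≥0}}`. -/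
def K1Set' (a b s : ℝ) : Set (ℂ × ℂ) :=
  {p : ℂ × ℂ | p.2 ∈ lam1Seg a b s ∧
    ∃ l : ℝ, 0 ≤ l ∧ p.1 = p.2 - starRingEnd ℂ (etaC a b) * (l : ℂ)}

/-- `K²_s = {(ζ, ζ̌) : ζ ∈ Λ⁰_{2,s}, ζ̌ ∈ ζ + ℝ_{≥0}}`. -/
def K2Set (a b s : ℝ) : Set (ℂ × ℂ) :=
  {p : ℂ × ℂ | p.1 ∈ lam2Seg a b s ∧ ∃ l : ℝ, 0 ≤ l ∧ p.2 = p.1 + (l : ℂ)}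

/-- `Ǩ²_s = {(ζ, ζ̌) : ζ̌ ∈ Λ⁰_{2,s}, ζ ∈ ζ̌ + ℝ_{≥0}}`. -/
def K2Set' (a b s : ℝ) : Set (ℂ × ℂ) :=
  {p : ℂ × ℂ | p.2 ∈ lam2Seg a b s ∧ ∃ l : ℝ, 0 ≤ l ∧ p.1 = p.2 + (l : ℂ)}

/-- A set `Z` is `κ`-dominated by `Z'`: every point of `Z` lies at distance `≤ κ` from `Z'`. -/
def SetDomBySet {α : Type*} [PseudoMetricSpace α] (κ : ℝ) (Z Z' : Set α) : Prop :=
  ∀ x ∈ Z, ∃ y ∈ Z', dist x y ≤ κ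

/-!
In the coordinates `(h, v) = (Im (η ζ), Im ζ)` the sector `S` is the open quadrant,
`‖x₁(α, ζ)‖ = e^{-h}` and `‖x₂(α, ζ)‖ = e^{-v}`; the direction `-η̄` moves only `v` and the
direction `1` moves only `h`, so `Λ⁰_{1,s} = {v = s, 0 ≤ h ≤ s}` and `Λ⁰_{2,s} = {h = s, 0 ≤ v ≤ s}`.
At a solution `‖xᵢ - yᵢ‖ ≍ e^{-s}`. If `ρ₁ ≈ 1`, both `h`-coordinates are at most `s + O(1)` and
`O(1)` apart; if `ρ₂` stays away from `1`, both `v`-coordinates are at least `s - O(1)`, and the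
smaller one is at most `s + O(1)` because `‖x₂ - y₂‖ ≤ 2 max (‖x₂‖, ‖y₂‖)`. Clamping `h` to `[0, s]`
and lowering the smaller `v` to `s` lands within `O(log (1 / (ε (1 - ε))))` of `K¹_s ∪ Ǩ¹_s`.
The case `ρ₂ ≈ 1` is the same with `h` and `v`, `K¹` and `K²` exchanged.
-/

open Real

lemma im_etaC_mul (a b : ℝ) (z : ℂ) : (etaC a b * z).im = b * z.re + a * z.im := by
  simp [etaC]; ring

lemma im_etaC_mul_sub_conj_mul (a b l : ℝ) (z : ℂ) :
    (etaC a b * (z - starRingEnd ℂ (etaC a b) * l)).im = (etaC a b * z).im := by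
  simp [etaC]; ring

lemma im_sub_conj_etaC_mul (a b l : ℝ) (z : ℂ) :
    (z - starRingEnd ℂ (etaC a b) * l).im = z.im + b * l := by
  simp [etaC]

lemma im_etaC_mul_add_ofReal (a b l : ℝ) (z : ℂ) :
    (etaC a b * (z + l)).im = (etaC a b * z).im + b * l := by
  simp [etaC]; ring

lemma norm_xmap_fst {a b : ℝ} (hb : b ≠ 0) {α : ℂ} (hα : α ≠ 0) (ζ : ℂ) :
    ‖(xmap a b α ζ).1‖ = exp (-(etaC a b * ζ).im) := by
  have hre : (Complex.I * etaC a b * (ζ + ((log ‖α‖ / b : ℝ) : ℂ))).re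
      = -(etaC a b * ζ).im - log ‖α‖ := by
    simp [etaC]; field_simp; ring
  rw [xmap, norm_mul, Complex.norm_exp, hre, exp_sub, exp_log (norm_pos_iff.2 hα)]
  field_simp

lemma norm_xmap_snd (a b : ℝ) (α ζ : ℂ) : ‖(xmap a b α ζ).2‖ = exp (-ζ.im) := by
  simp [xmap, Complex.norm_exp]

lemma dist_le_of_abs_im_sub_le {a b δ : ℝ} (hb : 0 < b) {z w : ℂ}
    (hh : |(etaC a b * z).im - (etaC a b * w).im| ≤ δ) (hv : |z.im - w.im| ≤ δ) :
    dist z w ≤ ((1 + |a|) / b + 1) * δ := by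
  have hre : |z.re - w.re| ≤ (1 + |a|) / b * δ := by
    rw [div_mul_eq_mul_div, le_div_iff₀ hb, ← abs_of_pos hb, ← abs_mul]
    have hsplit : (z.re - w.re) * b
        = ((etaC a b * z).im - (etaC a b * w).im) - a * (z.im - w.im) := by
      simp only [im_etaC_mul]; ring
    rw [hsplit]
    calc _ ≤ |(etaC a b * z).im - (etaC a b * w).im| + |a| * |z.im - w.im| := by
          rw [← abs_mul]; exact abs_sub _ _
      _ ≤ δ + |a| * δ := by gcongr
      _ = (1 + |a|) * δ := by ring
  calc dist z w ≤ |z.re - w.re| + |z.im - w.im| := by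
        rw [Complex.dist_eq, ← Complex.sub_re, ← Complex.sub_im]
        exact Complex.norm_le_abs_re_add_abs_im _
    _ ≤ (1 + |a|) / b * δ + δ := add_le_add hre hv
    _ = ((1 + |a|) / b + 1) * δ := by ring

lemma dist_prod_le_of_abs_im_sub_le {a b δ : ℝ} (hb : 0 < b) {p q : ℂ × ℂ}
    (hh₁ : |(etaC a b * p.1).im - (etaC a b * q.1).im| ≤ δ) (hv₁ : |p.1.im - q.1.im| ≤ δ)
    (hh₂ : |(etaC a b * p.2).im - (etaC a b * q.2).im| ≤ δ) (hv₂ : |p.2.im - q.2.im| ≤ δ) :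
    dist p q ≤ ((1 + |a|) / b + 1) * δ := by
  rw [Prod.dist_eq]
  exact max_le (dist_le_of_abs_im_sub_le hb hh₁ hv₁) (dist_le_of_abs_im_sub_le hb hh₂ hv₂)

lemma dist_swap_swap {X Y : Type*} [PseudoMetricSpace X] [PseudoMetricSpace Y] (p q : X × Y) :
    dist p.swap q.swap = dist p q := by
  simp only [Prod.dist_eq, Prod.fst_swap, Prod.snd_swap, max_comm]

/- For the exponents `u₁ = -log ‖x‖`, `u₂ = -log ‖y‖` of a pair with `‖x - y‖ ≍ e^{-s}`:
what `x / y ≈ 1` forces, and what `x / y` staying away from `1` forces. -/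
def ClosePair (s L u₁ u₂ : ℝ) : Prop := u₁ - s ≤ L ∧ u₂ - s ≤ L ∧ |u₁ - u₂| ≤ L

def FarPair (s L u₁ u₂ : ℝ) : Prop := s - u₁ ≤ L ∧ s - u₂ ≤ L ∧ min u₁ u₂ - s ≤ L

lemma ClosePair.symm {s L u₁ u₂ : ℝ} (h : ClosePair s L u₁ u₂) : ClosePair s L u₂ u₁ :=
  ⟨h.2.1, h.1, abs_sub_comm u₁ u₂ ▸ h.2.2⟩

lemma FarPair.symm {s L u₁ u₂ : ℝ} (h : FarPair s L u₁ u₂) : FarPair s L u₂ u₁ :=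
  ⟨h.2.1, h.1, min_comm u₁ u₂ ▸ h.2.2⟩

lemma sub_le_log_iff {M : ℝ} (hM : 0 < M) (u w : ℝ) :
    u - w ≤ log M ↔ exp (-w) ≤ M * exp (-u) := by
  rw [le_log_iff_exp_le hM, ← mul_le_mul_iff_of_pos_right (exp_pos (-u)), ← exp_add]
  ring_nf

section Pair

variable {x y : ℂ} {ε M s u₁ u₂ : ℝ}

lemma closePair_of_norm_div_sub_one_le (hε : ε < 1) (hM : 4 ≤ M) (hM₁ : 2 ≤ (1 - ε) * M)
    (hx : ‖x‖ = exp (-u₁)) (hy : ‖y‖ = exp (-u₂)) (hxy : exp (-s) ≤ 2 * ‖x - y‖)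
    (hρ : ‖x / y - 1‖ ≤ ε) : ClosePair s (log M) u₁ u₂ := by
  have hY : 0 < ‖y‖ := hy ▸ exp_pos _
  have hR : ‖x - y‖ ≤ ε * ‖y‖ := by
    rwa [div_sub_one (norm_pos_iff.1 hY), norm_div, div_le_iff₀ hY] at hρ
  have hxy₁ := norm_sub_norm_le x y
  have hxy₂ := norm_sub_norm_le y x
  rw [norm_sub_rev] at hxy₂
  rw [hy] at hR
  rw [hx, hy] at hxy₁ hxy₂
  have hX := exp_pos (-u₁)
  have hY := exp_pos (-u₂)
  have hM₀ : 0 < M := by linarith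
  refine ⟨(sub_le_log_iff hM₀ _ _).2 ?_, (sub_le_log_iff hM₀ _ _).2 ?_, abs_le.2 ⟨?_, ?_⟩⟩
  · nlinarith
  · nlinarith
  · rw [neg_le_sub_iff_le_add, ← sub_le_iff_le_add', sub_le_log_iff hM₀]; nlinarith
  · rw [sub_le_log_iff hM₀]; nlinarith

lemma min_sub_le_log_of_le_two_mul_norm_sub (hM : 4 ≤ M)
    (hx : ‖x‖ = exp (-u₁)) (hy : ‖y‖ = exp (-u₂)) (hxy : exp (-s) ≤ 2 * ‖x - y‖) :
    min u₁ u₂ - s ≤ log M := by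
  have hxy' := norm_sub_le x y
  rw [hx, hy] at hxy'
  rw [sub_le_log_iff (by linarith)]
  rcases le_total u₁ u₂ with h | h
  · rw [min_eq_left h]
    nlinarith [exp_le_exp.2 (neg_le_neg h), exp_pos (-u₁)]
  · rw [min_eq_right h]
    nlinarith [exp_le_exp.2 (neg_le_neg h), exp_pos (-u₂)]

lemma farPair_of_lt_norm_div_sub_one (hε : 0 < ε) (hε₁ : ε < 1) (hM : 4 ≤ M) (hM₂ : 6 ≤ ε * M)
    (hx : ‖x‖ = exp (-u₁)) (hy : ‖y‖ = exp (-u₂)) (hxy : exp (-s) ≤ 2 * ‖x - y‖)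
    (hxy' : ‖x - y‖ ≤ 3 / 2 * exp (-s)) (hρ : ε < ‖x / y - 1‖) : FarPair s (log M) u₁ u₂ := by
  have hY : 0 < ‖y‖ := hy ▸ exp_pos _
  have hR : ε * ‖y‖ < ‖x - y‖ := by
    rwa [div_sub_one (norm_pos_iff.1 hY), norm_div, lt_div_iff₀ hY] at hρ
  have hxy₁ := norm_sub_norm_le x y
  rw [hy] at hR
  rw [hx, hy] at hxy₁
  have hM₀ : 0 < M := by linarith
  refine ⟨(sub_le_log_iff hM₀ _ _).2 ?_, (sub_le_log_iff hM₀ _ _).2 ?_,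
    min_sub_le_log_of_le_two_mul_norm_sub hM hx hy hxy⟩
  · nlinarith [exp_pos (-s), exp_pos (-u₂)]
  · nlinarith [exp_pos (-s)]

end Pair

lemma norm_div_exp_bounds {θ : ℂ} (hθ : ‖θ - 1‖ < 1 / 2) (s : ℝ) :
    exp (-s) ≤ 2 * ‖θ / ((exp s : ℝ) : ℂ)‖ ∧ ‖θ / ((exp s : ℝ) : ℂ)‖ ≤ 3 / 2 * exp (-s) := by
  have hθ' := abs_le.1 ((abs_norm_sub_norm_le θ 1).trans hθ.le)
  rw [norm_one] at hθ'
  rw [norm_div, Complex.norm_real, norm_of_nonneg (exp_pos s).le, exp_neg, div_eq_mul_inv]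
  constructor <;> nlinarith [inv_pos.2 (exp_pos s)]

lemma exists_corner {s L c₁ c₂ f₁ f₂ : ℝ} (hs : 0 ≤ s) (hc₀ : 0 ≤ c₁)
    (hc : ClosePair s L c₁ c₂) (hf : FarPair s L f₁ f₂) (hle : f₁ ≤ f₂) :
    ∃ c f, 0 ≤ c ∧ c ≤ s ∧ s ≤ f ∧
      |c₁ - c| ≤ L ∧ |c₂ - c| ≤ L ∧ |f₁ - s| ≤ L ∧ |f₂ - f| ≤ L := by
  obtain ⟨hc₁, hc₂, hc₁₂⟩ := hc
  obtain ⟨hf₁, hf₂, hmin⟩ := hf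
  rw [abs_le] at hc₁₂
  rw [min_eq_left hle] at hmin
  refine ⟨min c₁ s, max s f₂, le_min hc₀ hs, min_le_right _ _, le_max_left _ _, ?_, ?_,
    abs_le.2 ⟨by linarith, by linarith⟩, ?_⟩ <;>
  rcases le_total c₁ s with h | h <;> rcases le_total s f₂ with h' | h' <;>
  simp only [min_eq_left, min_eq_right, max_eq_left, max_eq_right, h, h', abs_le] <;>
  constructor <;> linarith

section Corner

variable {a b s L : ℝ} {p : ℂ × ℂ}

lemma exists_mem_K1Set_dist_le (hb : 0 < b) (hs : 0 ≤ s) (hh₀ : 0 ≤ (etaC a b * p.1).im)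
    (hh : ClosePair s L (etaC a b * p.1).im (etaC a b * p.2).im) (hv : FarPair s L p.1.im p.2.im)
    (hle : p.1.im ≤ p.2.im) :
    ∃ q ∈ K1Set a b s, dist p q ≤ ((1 + |a|) / b + 1) * L := by
  obtain ⟨c, f, hc₀, hcs, hsf, hc₁, hc₂, hv₁, hv₂⟩ := exists_corner hs hh₀ hh hv hle
  set z : ℂ := -starRingEnd ℂ (etaC a b) * ((s / b : ℝ) : ℂ) + ((c / b : ℝ) : ℂ)
  set w : ℂ := z - starRingEnd ℂ (etaC a b) * (((f - s) / b : ℝ) : ℂ)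
  have hzh : (etaC a b * z).im = c := by simp [z, etaC]; field_simp; ring
  have hzv : z.im = s := by simp [z, etaC]; field_simp
  have hwh : (etaC a b * w).im = c := by rw [im_etaC_mul_sub_conj_mul, hzh]
  have hwv : w.im = f := by rw [im_sub_conj_etaC_mul, hzv]; field_simp; ring
  refine ⟨(z, w), ⟨⟨c / b, div_nonneg hc₀ hb.le, by gcongr, rfl⟩,
    (f - s) / b, div_nonneg (sub_nonneg.2 hsf) hb.le, rfl⟩, ?_⟩
  exact dist_prod_le_of_abs_im_sub_le hb (hzh ▸ hc₁) (hzv ▸ hv₁) (hwh ▸ hc₂) (hwv ▸ hv₂)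

lemma exists_mem_K2Set_dist_le (hb : 0 < b) (hs : 0 ≤ s) (hv₀ : 0 ≤ p.1.im)
    (hv : ClosePair s L p.1.im p.2.im) (hh : FarPair s L (etaC a b * p.1).im (etaC a b * p.2).im)
    (hle : (etaC a b * p.1).im ≤ (etaC a b * p.2).im) :
    ∃ q ∈ K2Set a b s, dist p q ≤ ((1 + |a|) / b + 1) * L := by
  obtain ⟨c, f, hc₀, hcs, hsf, hc₁, hc₂, hh₁, hh₂⟩ := exists_corner hs hv₀ hv hh hle
  set z : ℂ := ((s / b : ℝ) : ℂ) - starRingEnd ℂ (etaC a b) * ((c / b : ℝ) : ℂ)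
  set w : ℂ := z + (((f - s) / b : ℝ) : ℂ)
  have hzh : (etaC a b * z).im = s := by simp [z, etaC]; field_simp; ring
  have hzv : z.im = c := by simp [z, etaC]; field_simp
  have hwh : (etaC a b * w).im = f := by rw [im_etaC_mul_add_ofReal, hzh]; field_simp; ring
  have hwv : w.im = c := by simp [w, hzv]
  refine ⟨(z, w), ⟨⟨c / b, div_nonneg hc₀ hb.le, by gcongr, rfl⟩,
    (f - s) / b, div_nonneg (sub_nonneg.2 hsf) hb.le, rfl⟩, ?_⟩
  exact dist_prod_le_of_abs_im_sub_le hb (hzh ▸ hh₁) (hzv ▸ hc₁) (hwh ▸ hh₂) (hwv ▸ hc₂)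

lemma exists_mem_K1Set_union_dist_le (hb : 0 < b) (hs : 0 ≤ s)
    (hh₁ : 0 ≤ (etaC a b * p.1).im) (hh₂ : 0 ≤ (etaC a b * p.2).im)
    (hh : ClosePair s L (etaC a b * p.1).im (etaC a b * p.2).im) (hv : FarPair s L p.1.im p.2.im) :
    ∃ q ∈ K1Set a b s ∪ K1Set' a b s, dist p q ≤ ((1 + |a|) / b + 1) * L := by
  rcases le_total p.1.im p.2.im with hle | hle
  · obtain ⟨q, hq, hd⟩ := exists_mem_K1Set_dist_le hb hs hh₁ hh hv hle
    exact ⟨q, Or.inl hq, hd⟩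
  · obtain ⟨q, hq, hd⟩ := exists_mem_K1Set_dist_le (p := p.swap) hb hs hh₂ hh.symm hv.symm hle
    exact ⟨q.swap, Or.inr hq, by rwa [← dist_swap_swap, Prod.swap_swap]⟩

lemma exists_mem_K2Set_union_dist_le (hb : 0 < b) (hs : 0 ≤ s)
    (hv₁ : 0 ≤ p.1.im) (hv₂ : 0 ≤ p.2.im)
    (hv : ClosePair s L p.1.im p.2.im) (hh : FarPair s L (etaC a b * p.1).im (etaC a b * p.2).im) :
    ∃ q ∈ K2Set a b s ∪ K2Set' a b s, dist p q ≤ ((1 + |a|) / b + 1) * L := by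
  rcases le_total (etaC a b * p.1).im (etaC a b * p.2).im with hle | hle
  · obtain ⟨q, hq, hd⟩ := exists_mem_K2Set_dist_le hb hs hv₁ hv hh hle
    exact ⟨q, Or.inl hq, hd⟩
  · obtain ⟨q, hq, hd⟩ := exists_mem_K2Set_dist_le (p := p.swap) hb hs hv₂ hv.symm hh.symm hle
    exact ⟨q.swap, Or.inr hq, by rwa [← dist_swap_swap, Prod.swap_swap]⟩

end Corner

lemma exists_dist_le_of_mem_solB {a b s ε M : ℝ} {α β : ℂ} {θ p : ℂ × ℂ} (hb : 0 < b)
    (hs : 0 ≤ s) (hε : 0 < ε) (hε₁ : ε < 1) (hM : 4 ≤ M) (hM₁ : 2 ≤ (1 - ε) * M)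
    (hM₂ : 6 ≤ ε * M) (hα : α ≠ 0) (hβ : β ≠ 0) (hθ : θ ∈ thetaSet (1 / 2))
    (hp : p ∈ solB a b α β θ (exp s) ε) :
    ∃ q ∈ K1Set a b s ∪ K1Set' a b s ∪ K2Set a b s ∪ K2Set' a b s,
      dist p q ≤ ((1 + |a|) / b + 1) * log M := by
  obtain ⟨⟨⟨hv₁, hh₁⟩, ⟨hv₂, hh₂⟩, hsol₁, hsol₂⟩, hρ⟩ := hp
  rw [← im_etaC_mul] at hh₁ hh₂
  obtain ⟨hlow₁, hup₁⟩ := norm_div_exp_bounds hθ.1 s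
  obtain ⟨hlow₂, hup₂⟩ := norm_div_exp_bounds hθ.2 s
  rw [← hsol₁] at hlow₁ hup₁
  rw [← hsol₂] at hlow₂ hup₂
  have hx₁ := norm_xmap_fst (a := a) hb.ne' hα p.1
  have hy₁ := norm_xmap_fst (a := a) hb.ne' hβ p.2
  have hx₂ := norm_xmap_snd a b α p.1
  have hy₂ := norm_xmap_snd a b β p.2
  rcases hρ with ⟨hc, hf⟩ | ⟨hc, hf⟩
  · have hh := closePair_of_norm_div_sub_one_le hε₁ hM hM₁ hx₁ hy₁ hlow₁ hc
    have hv := farPair_of_lt_norm_div_sub_one hε hε₁ hM hM₂ hx₂ hy₂ hlow₂ hup₂ (not_le.1 hf)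
    obtain ⟨q, hq, hd⟩ := exists_mem_K1Set_union_dist_le hb hs hh₁.le hh₂.le hh hv
    exact ⟨q, Or.inl (Or.inl hq), hd⟩
  · have hv := closePair_of_norm_div_sub_one_le hε₁ hM hM₁ hx₂ hy₂ hlow₂ hc
    have hh := farPair_of_lt_norm_div_sub_one hε hε₁ hM hM₂ hx₁ hy₁ hlow₁ hup₁ (not_le.1 hf)
    obtain ⟨q, hq | hq, hd⟩ := exists_mem_K2Set_union_dist_le hb hs hv₁.le hv₂.le hv hh
    · exact ⟨q, Or.inl (Or.inr hq), hd⟩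
    · exact ⟨q, Or.inr hq, hd⟩

lemma ne_zero_of_mem_ringA {b : ℝ} {α : ℂ} (hα : α ∈ ringA b) : α ≠ 0 :=
  norm_pos_iff.1 ((exp_pos _).trans hα.1)

/-- for every `ε ∈ (0,1)` there is `κ_ε > 0` such that, for all sufficiently
large `λ = e^s`, the set `Z^{B,ε,λ}_{α,β,θ}` is `κ_ε`-dominated by
`K¹_s ∪ Ǩ¹_s ∪ K²_s ∪ Ǩ²_s`, uniformly in `α, β ∈ 𝔸` and `θ ∈ Θ`. -/
theorem stmt13 (a b : ℝ) (hb : 0 < b) :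
    ∃ e0 : ℝ, 0 < e0 ∧
      ∀ ε : ℝ, 0 < ε → ε < 1 →
        ∃ κ : ℝ, 0 < κ ∧ ∃ s₀ : ℝ, ∀ s : ℝ, s₀ ≤ s →
          ∀ α ∈ ringA b, ∀ β ∈ ringA b, ∀ θ ∈ thetaSet e0,
            SetDomBySet κ (solB a b α β θ (Real.exp s) ε)
              (K1Set a b s ∪ K1Set' a b s ∪ K2Set a b s ∪ K2Set' a b s) := by
  refine ⟨1 / 2, one_half_pos, fun ε hε hε₁ => ?_⟩
  have hε' : 0 < 1 - ε := sub_pos.2 hε₁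
  set M := 6 / (ε * (1 - ε))
  have hM : 4 ≤ M := by rw [le_div_iff₀ (by positivity)]; nlinarith
  have hM₁ : 2 ≤ (1 - ε) * M := by
    rw [show (1 - ε) * M = 6 / ε by simp only [M]; field_simp, le_div_iff₀ hε]; linarith
  have hM₂ : 6 ≤ ε * M := by
    rw [show ε * M = 6 / (1 - ε) by simp only [M]; field_simp, le_div_iff₀ hε']; linarith
  refine ⟨((1 + |a|) / b + 1) * log M, by have := log_pos (by linarith : 1 < M); positivity,
    0, fun s hs α hα β hβ θ hθ p hp => ?_⟩
  exact exists_dist_le_of_mem_solB hb hs hε hε₁ hM hM₁ hM₂ (ne_zero_of_mem_ringA hα)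
    (ne_zero_of_mem_ringA hβ) hθ hp
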